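/- arXiv:2508.05241 — 2 statements merged into one kernel-verified Lean document; each statement's English description precedes it below -/
import Mathlib

section
/- If each one-step map ρ_t in a family satisfies conditional cash invariance and monotonicity, then the recursively defined dynamic risk measure ρ_{t,T}(Z_t,…,Z_T) = Z_t + ρ_t(Z_{t+1} + ρ_{t+1}(Z_{t+2} + ⋯ + ρ_{T−1}(Z_T)⋯)) is time-consistent: if (X_{t₂},…,X_T) and (Y_{t₂},…,Y_T) satisfy ρ_{t₂,T}(X_{t₂},…,X_T) ≤ ρ_{t₂,T}(Y_{t₂},…,Y_T) and X_k = Y_k for k = t₁,…,t₂, then ρ_{t₁,T}(X_{t₁},…,X_T) ≤ ρ_{t₁,T}(Y_{t₁},…,Y_T). -/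
/-- Recursive dynamic risk measure with fuel: `dynRisk ρ Z t k` is
`ρ_{t,t+k}(Z_t,…,Z_{t+k})`, i.e. `Z t + ρ t (dynRisk ρ Z (t+1) (k-1))`. -/
noncomputable def dynRisk {Ω : Type*} (ρ : ℕ → (Ω → ℝ) → (Ω → ℝ))
    (Z : ℕ → Ω → ℝ) : ℕ → ℕ → Ω → ℝ
  | t, 0 => Z t
  | t, k + 1 => Z t + ρ t (dynRisk ρ Z (t + 1) k)

/-- if each one-step map is conditionally cash invariant and
monotone, the recursively defined dynamic risk measure is time-consistent. -/
theorem dynRisk_time_consistent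
    {Ω : Type*} (F : ℕ → MeasurableSpace Ω)
    (ρ : ℕ → (Ω → ℝ) → (Ω → ℝ))
    (cash : ∀ (t : ℕ) (X W : Ω → ℝ), @Measurable Ω ℝ (F t) _ W →
      ρ t (X + W) = ρ t X + W)
    (mono : ∀ (t : ℕ) (X Y : Ω → ℝ), X ≤ Y → ρ t X ≤ ρ t Y)
    (T t₁ t₂ : ℕ) (h1 : t₁ ≤ t₂) (h2 : t₂ ≤ T)
    (X Y : ℕ → Ω → ℝ)
    (hXY : dynRisk ρ X t₂ (T - t₂) ≤ dynRisk ρ Y t₂ (T - t₂))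
    (heq : ∀ k, t₁ ≤ k → k ≤ t₂ → X k = Y k) :
    dynRisk ρ X t₁ (T - t₁) ≤ dynRisk ρ Y t₁ (T - t₁) := by
  induction' hn : t₂ - t₁ with n ih generalizing t₁
  · have : t₁ = t₂ := by omega
    subst this; exact hXY
  · have ht : t₁ < t₂ := by omega
    have hs : T - t₁ = (T - (t₁ + 1)) + 1 := by omega
    rw [hs]
    have hIH := ih (t₁ + 1) (by omega)
      (fun k hk1 hk2 => heq k (by omega) hk2) (by omega)
    show X t₁ + ρ t₁ (dynRisk ρ X (t₁ + 1) (T - (t₁ + 1)))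
        ≤ Y t₁ + ρ t₁ (dynRisk ρ Y (t₁ + 1) (T - (t₁ + 1)))
    rw [heq t₁ le_rfl ht.le]
    exact add_le_add le_rfl (mono _ _ _ hIH)
end

section
/- Error propagation in backward value approximation: suppose V_t satisfies the recursion V_t = q_t ρ^B_t(c^B_t) + p_t ρ^A_t(c^A_t + e^{−r} V_{t+1}) with ρ^A_t, ρ^B_t Lipschitz with constant 1 in the sup norm, and suppose approximations V̂_t satisfy ‖V̂_T − V_T‖_∞ < ε_T and, for each t < T, ‖V̂_t − (q_t ρ^B_t(c^B_t) + p_t ρ^A_t(c^A_t + e^{−r} V̂_{t+1}))‖_∞ < ε_t. Then ‖V̂_t − V_t‖_∞ < ε_t + p_t e^{−r} (error at t+1), and by induction ‖V̂_t − V_t‖_∞ < Σ_{k=t}^{T} (∏_{j=t}^{k−1} p_j e^{−r}) ε_k. -/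
/-!
The Bellman operator `Φ_t W = q_t ρ^B_t(c^B_t) + p_t ρ^A_t(c^A_t + e^{−r} W)` is
`p_t e^{−r}`-Lipschitz, since its `ρ^B` part does not depend on `W`. With `V_t = Φ_t V_{t+1}`, the
triangle inequality through `Φ_t V̂_{t+1}` gives `e_t < ε_t + p_t e^{−r} e_{t+1}` for the errors
`e_t = ‖V̂_t − V_t‖`, and unrolling this recursion backwards from `e_T < ε_T` gives the discounted
sum.
-/
/-- Sup norm over a finite nonempty state space. -/
noncomputable def supNorm {S : Type*} [Fintype S] [Nonempty S] (f : S → ℝ) : ℝ :=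
  Finset.univ.sup' Finset.univ_nonempty (fun s => |f s|)

open Finset

theorem supNorm_eq_norm {S : Type*} [Fintype S] [Nonempty S] (f : S → ℝ) :
    supNorm f = ‖f‖ := by
  have le_supNorm (s : S) : |f s| ≤ supNorm f := le_sup' (fun s => |f s|) (mem_univ s)
  refine le_antisymm (sup'_le _ _ fun s _ => norm_le_pi_norm f s) ?_
  exact (pi_norm_le_iff_of_nonneg ((abs_nonneg _).trans (le_supNorm (Classical.arbitrary S)))).2
    le_supNorm

theorem norm_add_smul_sub_add_smul_le {E F : Type*} [SeminormedAddCommGroup E] [NormedSpace ℝ E]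
    [SeminormedAddCommGroup F] [NormedSpace ℝ F] {ρ : E → F} (hρ : LipschitzWith 1 ρ)
    {p γ : ℝ} (hp : 0 ≤ p) (hγ : 0 ≤ γ) (b : F) (c W W' : E) :
    ‖(b + p • ρ (c + γ • W)) - (b + p • ρ (c + γ • W'))‖ ≤ p * γ * ‖W - W'‖ := by
  have hρ' := hρ.norm_sub_le (c + γ • W) (c + γ • W')
  rw [add_sub_add_left_eq_sub, ← smul_sub, norm_smul, Real.norm_of_nonneg hp, mul_assoc]
  rw [add_sub_add_left_eq_sub, ← smul_sub, norm_smul, Real.norm_of_nonneg hγ, NNReal.coe_one,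
    one_mul] at hρ'
  exact mul_le_mul_of_nonneg_left hρ' hp

theorem sum_Icc_prod_Ico_mul_of_lt {R : Type*} [CommSemiring R] (a ε : ℕ → R) {t T : ℕ}
    (ht : t < T) :
    ∑ k ∈ Icc t T, (∏ j ∈ Ico t k, a j) * ε k =
      ε t + a t * ∑ k ∈ Icc (t + 1) T, (∏ j ∈ Ico (t + 1) k, a j) * ε k := by
  rw [← sum_Ioc_add_eq_sum_Icc ht.le, ← Icc_add_one_left_eq_Ioc, Ico_self, prod_empty, one_mul,
    add_comm, mul_sum]
  congr 1
  refine sum_congr rfl fun k hk => ?_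
  rw [prod_eq_prod_Ico_succ_bot (by simp only [mem_Icc] at hk; omega), mul_assoc]

theorem lt_sum_Icc_prod_Ico_mul_of_lt_add_mul {R : Type*} [CommSemiring R] [PartialOrder R]
    [IsOrderedCancelAddMonoid R] [IsOrderedRing R] {e a ε : ℕ → R} {T : ℕ} (ha : ∀ t < T, 0 ≤ a t)
    (hT : e T < ε T) (hstep : ∀ t < T, e t < ε t + a t * e (t + 1)) :
    ∀ t ≤ T, e t < ∑ k ∈ Icc t T, (∏ j ∈ Ico t k, a j) * ε k := by
  intro t ht
  induction ht using Nat.decreasingInduction with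
  | self => simpa using hT
  | of_succ t ht ih =>
    rw [sum_Icc_prod_Ico_mul_of_lt a ε ht]
    exact (hstep t ht).trans_le (by gcongr; exact ha t ht)

theorem value_approximation_error_propagation_general
    {S : Type*} [Fintype S] [Nonempty S]
    (T : ℕ) (p q : ℕ → ℝ) (r : ℝ)
    (hp0 : ∀ t, 0 ≤ p t)
    (ρA ρB : ℕ → (S → ℝ) → (S → ℝ))
    (lipA : ∀ (t : ℕ) (X Y : S → ℝ), supNorm (ρA t X - ρA t Y) ≤ supNorm (X - Y))
    (cA cB : ℕ → S → ℝ)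
    (V Vhat : ℕ → S → ℝ) (ε : ℕ → ℝ)
    (hV : ∀ t < T, V t = fun s =>
      q t * ρB t (cB t) s +
      p t * ρA t (fun s' => cA t s' + Real.exp (-r) * V (t + 1) s') s)
    (hT : supNorm (Vhat T - V T) < ε T)
    (hstep : ∀ t < T,
      supNorm (Vhat t - fun s =>
        q t * ρB t (cB t) s +
        p t * ρA t (fun s' => cA t s' + Real.exp (-r) * Vhat (t + 1) s') s) < ε t) :
    (∀ t < T, supNorm (Vhat t - V t) <
      ε t + p t * Real.exp (-r) * supNorm (Vhat (t + 1) - V (t + 1))) ∧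
    (∀ t ≤ T, supNorm (Vhat t - V t) <
      ∑ k ∈ Finset.Icc t T, (∏ j ∈ Finset.Ico t k, p j * Real.exp (-r)) * ε k) := by
  have hγ : 0 ≤ Real.exp (-r) := (Real.exp_pos _).le
  have hρA : ∀ t, LipschitzWith 1 (ρA t) := fun t => LipschitzWith.of_dist_le_mul fun X Y => by
    simpa only [dist_eq_norm, supNorm_eq_norm, NNReal.coe_one, one_mul] using lipA t X Y
  simp only [supNorm_eq_norm] at hT hstep ⊢
  have one_step : ∀ t < T, ‖Vhat t - V t‖ <
      ε t + p t * Real.exp (-r) * ‖Vhat (t + 1) - V (t + 1)‖ := by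
    intro t ht
    calc ‖Vhat t - V t‖
        ≤ ‖Vhat t - (q t • ρB t (cB t) + p t • ρA t (cA t + Real.exp (-r) • Vhat (t + 1)))‖ +
          ‖(q t • ρB t (cB t) + p t • ρA t (cA t + Real.exp (-r) • Vhat (t + 1))) - V t‖ :=
          norm_sub_le_norm_sub_add_norm_sub _ _ _
      _ < ε t + p t * Real.exp (-r) * ‖Vhat (t + 1) - V (t + 1)‖ := by
          rw [hV t ht]
          exact add_lt_add_of_lt_of_le (hstep t ht)
            (norm_add_smul_sub_add_smul_le (hρA t) (hp0 t) hγ _ _ _ _)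
  exact ⟨one_step, lt_sum_Icc_prod_Ico_mul_of_lt_add_mul
    (fun t _ => mul_nonneg (hp0 t) hγ) hT one_step⟩

/-- error propagation in backward value approximation: the
one-step bound `‖V̂_t − V_t‖ < ε_t + p_t e^{−r} ‖V̂_{t+1} − V_{t+1}‖` and the
inductive bound `‖V̂_t − V_t‖ < Σ_{k=t}^{T} (∏_{j=t}^{k−1} p_j e^{−r}) ε_k`. -/
theorem value_approximation_error_propagation
    {S : Type*} [Fintype S] [Nonempty S]
    (T : ℕ) (p q : ℕ → ℝ) (r : ℝ) (hr : 0 ≤ r)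
    (hp0 : ∀ t, 0 ≤ p t) (hp1 : ∀ t, p t ≤ 1)
    (hq0 : ∀ t, 0 ≤ q t) (hq1 : ∀ t, q t ≤ 1)
    (ρA ρB : ℕ → (S → ℝ) → (S → ℝ))
    (lipA : ∀ (t : ℕ) (X Y : S → ℝ), supNorm (ρA t X - ρA t Y) ≤ supNorm (X - Y))
    (lipB : ∀ (t : ℕ) (X Y : S → ℝ), supNorm (ρB t X - ρB t Y) ≤ supNorm (X - Y))
    (cA cB : ℕ → S → ℝ)
    (V Vhat : ℕ → S → ℝ) (ε : ℕ → ℝ)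
    (hV : ∀ t < T, V t = fun s =>
      q t * ρB t (cB t) s +
      p t * ρA t (fun s' => cA t s' + Real.exp (-r) * V (t + 1) s') s)
    (hT : supNorm (Vhat T - V T) < ε T)
    (hstep : ∀ t < T,
      supNorm (Vhat t - fun s =>
        q t * ρB t (cB t) s +
        p t * ρA t (fun s' => cA t s' + Real.exp (-r) * Vhat (t + 1) s') s) < ε t) :
    (∀ t < T, supNorm (Vhat t - V t) <
      ε t + p t * Real.exp (-r) * supNorm (Vhat (t + 1) - V (t + 1))) ∧
    (∀ t ≤ T, supNorm (Vhat t - V t) <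
      ∑ k ∈ Finset.Icc t T, (∏ j ∈ Finset.Ico t k, p j * Real.exp (-r)) * ε k) :=
  value_approximation_error_propagation_general T p q r hp0 ρA ρB lipA cA cB V Vhat ε hV hT hstep
end
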